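/- arXiv:1509.02132 — 3 statements merged into one kernel-verified Lean document; each statement's English description precedes it below -/
import Mathlib

section
/- Let V and E be finite types, let r be a natural number, and let M : Matrix V E ℝ be the incidence matrix of an r-regular simple oriented hypergraph (all entries of M lie in {-1, 0, 1} and every row of M has exactly r nonzero entries). If λ : ℝ is an eigenvalue of the adjacency matrix A(M), i.e., there exists x : V → ℝ with x ≠ 0 and (A(M)).mulVec x = λ • x, then λ ≤ r. -/
open Matrix

/-- The adjacency matrix of the oriented hypergraph with incidence matrix `M`:
`A(M) i j = -∑ e, M i e * M j e` for `i ≠ j`, and `0` on the diagonal. -/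
noncomputable def adjMat {V E : Type*} [Fintype E] [DecidableEq V]
    (M : Matrix V E ℝ) : Matrix V V ℝ :=
  fun i j => if i = j then 0 else -∑ e, M i e * M j e

theorem adjacency_eigenvalue_le_of_regular
    {V E : Type*} [Fintype V] [Fintype E] [DecidableEq V] (r : ℕ)
    (M : Matrix V E ℝ) (hM : ∀ i e, M i e ∈ ({-1, 0, 1} : Set ℝ))
    (hr : ∀ i, (Finset.univ.filter fun e => M i e ≠ 0).card = r)
    (lam : ℝ) (x : V → ℝ) (hx : x ≠ 0) (heig : (adjMat M).mulVec x = lam • x) :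
    lam ≤ (r : ℝ) := by
  have hA : adjMat M = (r : ℝ) • (1 : Matrix V V ℝ) - M * Mᵀ := by
    ext i j
    simp only [adjMat, Matrix.sub_apply, Matrix.smul_apply, Matrix.one_apply,
      Matrix.mul_apply, Matrix.transpose_apply, smul_eq_mul]
    by_cases h : i = j
    · subst h
      simp only [if_pos rfl, mul_one]
      have : ∀ e, M i e * M i e = if M i e ≠ 0 then (1 : ℝ) else 0 := by
        intro e
        have h := hM i e
        simp only [Set.mem_insert_iff, Set.mem_singleton_iff] at h
        rcases h with h | h | h <;> simp [h]
      rw [show (∑ e, M i e * M i e) = ∑ e, (if M i e ≠ 0 then (1:ℝ) else 0) from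
        Finset.sum_congr rfl fun e _ => this e, Finset.sum_ite, Finset.sum_const,
        Finset.sum_const, hr i]
      simp
    · simp [h]
  have key : x ⬝ᵥ (adjMat M).mulVec x =
      (r : ℝ) * (x ⬝ᵥ x) - (Mᵀ.mulVec x) ⬝ᵥ (Mᵀ.mulVec x) := by
    rw [hA, Matrix.sub_mulVec, dotProduct_sub, Matrix.smul_mulVec,
      Matrix.one_mulVec, dotProduct_smul, smul_eq_mul]
    congr 1
    rw [← Matrix.mulVec_mulVec, Matrix.dotProduct_mulVec, ← Matrix.mulVec_transpose]
  have hS : (0 : ℝ) < x ⬝ᵥ x := by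
    rcases lt_or_eq_of_le (Finset.sum_nonneg (fun i _ => mul_self_nonneg (x i))) with h | h
    · exact h
    · exact absurd ((dotProduct_self_eq_zero).mp h.symm) hx
  have hleft : x ⬝ᵥ (adjMat M).mulVec x = lam * (x ⬝ᵥ x) := by
    rw [heig, dotProduct_smul, smul_eq_mul]
  have hnn : (0 : ℝ) ≤ (Mᵀ.mulVec x) ⬝ᵥ (Mᵀ.mulVec x) := Finset.sum_nonneg (fun i _ => mul_self_nonneg _)
  have : lam * (x ⬝ᵥ x) ≤ (r : ℝ) * (x ⬝ᵥ x) := by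
    rw [← hleft, key]; linarith
  exact le_of_mul_le_mul_right (by linarith [this]) hS |>.trans_eq rfl
end

section
/- Let V and E be finite types and let M : Matrix V E ℝ be the incidence matrix of a simple oriented hypergraph (all entries of M lie in {-1, 0, 1}). Let ζ : V → ℝ and ξ : E → ℝ take values in {-1, 1} (a vertex-switching function and an edge-switching function), and let M' : Matrix V E ℝ be the switched incidence matrix defined by M' i e = ζ i * (M i e) * ξ e. Then: (1) M' = (Matrix.diagonal ζ) * M * (Matrix.diagonal ξ); (2) A(M') = (Matrix.diagonal ζ) * A(M) * (Matrix.diagonal ζ); and (3) L(M') = (Matrix.diagonal ζ) * L(M) * (Matrix.diagonal ζ). -/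
open Matrix

/-- The degree matrix: the diagonal matrix whose `(i,i)` entry is the number of
edges `e` with `M i e ≠ 0`. -/
noncomputable def degMat {V E : Type*} [Fintype E] [DecidableEq V]
    (M : Matrix V E ℝ) : Matrix V V ℝ :=
  Matrix.diagonal fun i => ((Finset.univ.filter fun e => M i e ≠ 0).card : ℝ)

/-- The Laplacian matrix `L(M) = D(M) - A(M)`. -/
noncomputable def lapMat {V E : Type*} [Fintype E] [DecidableEq V]
    (M : Matrix V E ℝ) : Matrix V V ℝ :=
  degMat M - adjMat M

theorem switching_matrices
    {V E : Type*} [Fintype V] [Fintype E] [DecidableEq V] [DecidableEq E]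
    (M : Matrix V E ℝ) (hM : ∀ i e, M i e ∈ ({-1, 0, 1} : Set ℝ))
    (ζ : V → ℝ) (ξ : E → ℝ)
    (hζ : ∀ i, ζ i = -1 ∨ ζ i = 1) (hξ : ∀ e, ξ e = -1 ∨ ξ e = 1)
    (M' : Matrix V E ℝ) (hM' : ∀ i e, M' i e = ζ i * M i e * ξ e) :
    M' = Matrix.diagonal ζ * M * Matrix.diagonal ξ ∧
    adjMat M' = Matrix.diagonal ζ * adjMat M * Matrix.diagonal ζ ∧
    lapMat M' = Matrix.diagonal ζ * lapMat M * Matrix.diagonal ζ := by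
  have hζ2 : ∀ i, ζ i * ζ i = 1 := by
    intro i; rcases hζ i with h | h <;> rw [h] <;> norm_num
  have hξ2 : ∀ e, ξ e * ξ e = 1 := by
    intro e; rcases hξ e with h | h <;> rw [h] <;> norm_num
  have hζ0 : ∀ i, ζ i ≠ 0 := by
    intro i; rcases hζ i with h | h <;> rw [h] <;> norm_num
  have hξ0 : ∀ e, ξ e ≠ 0 := by
    intro e; rcases hξ e with h | h <;> rw [h] <;> norm_num
  have hfilter : ∀ i, (Finset.univ.filter fun e => M' i e ≠ 0)
      = (Finset.univ.filter fun e => M i e ≠ 0) := by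
    intro i
    apply Finset.filter_congr
    intro e _
    simp only [hM', mul_ne_zero_iff]
    constructor
    · rintro ⟨⟨-, h⟩, -⟩; exact h
    · exact fun h => ⟨⟨hζ0 i, h⟩, hξ0 e⟩
  have hdeg : degMat M' = degMat M := by
    unfold degMat; simp only [hfilter]
  have hadj : adjMat M' = Matrix.diagonal ζ * adjMat M * Matrix.diagonal ζ := by
    funext i j
    rw [Matrix.mul_apply_eq_vecMul, Matrix.vecMul_diagonal, Matrix.diagonal_mul]
    show adjMat M' i j = ζ i * adjMat M i j * ζ j
    unfold adjMat
    by_cases h : i = j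
    · simp [h]
    · simp only [if_neg h]
      calc -∑ e, M' i e * M' j e = -∑ e, ζ i * (M i e * M j e) * ζ j := by
            congr 1
            apply Finset.sum_congr rfl
            intro e _
            rw [hM' i e, hM' j e]
            linear_combination (ζ i * ζ j * M i e * M j e) * hξ2 e
        _ = ζ i * (-∑ e, M i e * M j e) * ζ j := by
            rw [← Finset.sum_mul, ← Finset.mul_sum]; ring
  refine ⟨?_, hadj, ?_⟩
  · funext i e
    simp [Matrix.mul_apply, Matrix.diagonal_apply, hM', Finset.sum_ite_eq,
      Finset.sum_ite_eq', mul_comm]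
  · unfold lapMat
    rw [hdeg, hadj, Matrix.mul_sub, Matrix.sub_mul]
    congr 1
    unfold degMat
    funext i j
    rw [Matrix.mul_apply_eq_vecMul, Matrix.vecMul_diagonal, Matrix.diagonal_mul]
    show Matrix.diagonal _ i j = ζ i * Matrix.diagonal _ i j * ζ j
    by_cases h : i = j
    · subst h
      simp only [Matrix.diagonal_apply_eq]
      linear_combination (-((Finset.univ.filter fun e => M i e ≠ 0).card : ℝ)) * hζ2 i
    · simp [Matrix.diagonal_apply_ne _ h]
end

section
/- Let V and E be finite types and let M : Matrix V E ℝ be the incidence matrix of a simple oriented hypergraph (all entries of M lie in {-1, 0, 1}). Let ζ : V → ℝ and ξ : E → ℝ take values in {-1, 1}, and let M' i e = ζ i * (M i e) * ξ e be the switched incidence matrix. Then for every μ : ℝ, μ is an eigenvalue of A(M') if and only if μ is an eigenvalue of A(M); and μ is an eigenvalue of L(M') if and only if μ is an eigenvalue of L(M). -/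
open Matrix

private lemma conj_eig_mp {V : Type*} [Fintype V]
    (N N' : Matrix V V ℝ) (ζ : V → ℝ) (hζ : ∀ i, ζ i * ζ i = 1)
    (hN : ∀ i j, N' i j = ζ i * ζ j * N i j) (mu : ℝ)
    (h : ∃ x : V → ℝ, x ≠ 0 ∧ N.mulVec x = mu • x) :
    ∃ x : V → ℝ, x ≠ 0 ∧ N'.mulVec x = mu • x := by
  obtain ⟨x, hx0, hx⟩ := h
  refine ⟨fun i => ζ i * x i, ?_, ?_⟩
  · intro h
    apply hx0
    funext i
    have := congrFun h i
    simp only [Pi.zero_apply] at this ⊢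
    have hζi : ζ i ≠ 0 := by
      intro h0; have := hζ i; rw [h0] at this; norm_num at this
    exact (mul_eq_zero.mp this).resolve_left hζi
  · funext i
    have hxi := congrFun hx i
    simp only [mulVec, dotProduct, Pi.smul_apply, smul_eq_mul] at hxi ⊢
    have : ∑ j, N' i j * (ζ j * x j) = ζ i * ∑ j, N i j * x j := by
      rw [Finset.mul_sum]
      refine Finset.sum_congr rfl fun j _ => ?_
      rw [hN i j,
        show ζ i * ζ j * N i j * (ζ j * x j) = (ζ j * ζ j) * (ζ i * (N i j * x j)) by ring,
        hζ j]
      ring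
    rw [this, hxi]; ring

private lemma conj_eig {V : Type*} [Fintype V]
    (N N' : Matrix V V ℝ) (ζ : V → ℝ) (hζ : ∀ i, ζ i * ζ i = 1)
    (hN : ∀ i j, N' i j = ζ i * ζ j * N i j) (mu : ℝ) :
    (∃ x : V → ℝ, x ≠ 0 ∧ N'.mulVec x = mu • x) ↔
      (∃ x : V → ℝ, x ≠ 0 ∧ N.mulVec x = mu • x) := by
  constructor
  · exact conj_eig_mp N' N ζ hζ (fun i j => by
      rw [hN i j, ← mul_assoc]
      rw [show ζ i * ζ j * (ζ i * ζ j) = (ζ i * ζ i) * (ζ j * ζ j) by ring, hζ i, hζ j]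
      ring) mu
  · exact conj_eig_mp N N' ζ hζ hN mu

theorem switching_preserves_eigenvalues
    {V E : Type*} [Fintype V] [Fintype E] [DecidableEq V] [DecidableEq E]
    (M : Matrix V E ℝ) (hM : ∀ i e, M i e ∈ ({-1, 0, 1} : Set ℝ))
    (ζ : V → ℝ) (ξ : E → ℝ)
    (hζ : ∀ i, ζ i = -1 ∨ ζ i = 1) (hξ : ∀ e, ξ e = -1 ∨ ξ e = 1)
    (M' : Matrix V E ℝ) (hM' : ∀ i e, M' i e = ζ i * M i e * ξ e)
    (mu : ℝ) :
    ((∃ x : V → ℝ, x ≠ 0 ∧ (adjMat M').mulVec x = mu • x) ↔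
      (∃ x : V → ℝ, x ≠ 0 ∧ (adjMat M).mulVec x = mu • x)) ∧
    ((∃ x : V → ℝ, x ≠ 0 ∧ (lapMat M').mulVec x = mu • x) ↔
      (∃ x : V → ℝ, x ≠ 0 ∧ (lapMat M).mulVec x = mu • x)) := by
  have hζsq : ∀ i, ζ i * ζ i = 1 := fun i => by rcases hζ i with h | h <;> rw [h] <;> norm_num
  have hξsq : ∀ e, ξ e * ξ e = 1 := fun e => by rcases hξ e with h | h <;> rw [h] <;> norm_num
  have hζne : ∀ i, ζ i ≠ 0 := fun i => by rcases hζ i with h | h <;> rw [h] <;> norm_num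
  have hξne : ∀ e, ξ e ≠ 0 := fun e => by rcases hξ e with h | h <;> rw [h] <;> norm_num
  have hadj : ∀ i j, adjMat M' i j = ζ i * ζ j * adjMat M i j := by
    intro i j
    unfold adjMat
    by_cases h : i = j
    · simp [h]
    · simp only [h, if_false]
      rw [← Finset.sum_neg_distrib, ← Finset.sum_neg_distrib, Finset.mul_sum]
      refine Finset.sum_congr rfl fun e _ => ?_
      rw [hM' i e, hM' j e]
      rw [show ζ i * M i e * ξ e * (ζ j * M j e * ξ e)
          = (ξ e * ξ e) * (ζ i * M i e * (ζ j * M j e)) by ring, hξsq e]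
      ring
  have hdeg : ∀ i j, degMat M' i j = ζ i * ζ j * degMat M i j := by
    intro i j
    unfold degMat
    by_cases h : i = j
    · subst h
      simp only [Matrix.diagonal_apply_eq]
      have : (Finset.univ.filter fun e => M' i e ≠ 0)
          = (Finset.univ.filter fun e => M i e ≠ 0) := by
        refine Finset.filter_congr fun e _ => ?_
        rw [hM' i e]
        constructor
        · intro h hme; apply h; rw [hme]; ring
        · intro h hme
          apply h
          rcases mul_eq_zero.mp hme with h1 | h1
          · rcases mul_eq_zero.mp h1 with h2 | h2
            · exact absurd h2 (hζne i)
            · exact h2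
          · exact absurd h1 (hξne e)
      rw [this]
      rw [show ζ i * ζ i * _ = (ζ i * ζ i) * _ from rfl, hζsq i, one_mul]
    · simp [Matrix.diagonal_apply_ne _ h]
  refine ⟨conj_eig _ _ ζ hζsq hadj mu, conj_eig _ _ ζ hζsq ?_ mu⟩
  intro i j
  unfold lapMat
  simp only [Matrix.sub_apply]
  rw [hadj i j, hdeg i j]; ring
end
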